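/- Under the tie-breaking assumption and for 𝒳 = ℝ^D with Euclidean distance, the minimiser over k of the fast LOOCV formula ((k+1)/k)² · RSS(k+1)/n coincides with the minimiser over k of the brute-force LOOCV score (1/n) Σ_ℓ ‖f̂_{k, D_n \ {(x_ℓ,y_ℓ)}}(x_ℓ) − y_ℓ‖², for k ranging over {1, …, n−1}. -/

import Mathlib

/-- `T` is a set of indices of `m` nearest neighbours of `x*` among the points
`p i`, `i ∈ S`. -/
def IsNNIdx {X ι : Type*} [MetricSpace X] [DecidableEq ι] (p : ι → X) (x : X)
    (m : ℕ) (S T : Finset ι) : Prop :=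
  T ⊆ S ∧ T.card = m ∧ ∀ t ∈ T, ∀ s ∈ S \ T, dist x (p t) < dist x (p s)

lemma nn_unique {X ι : Type*} [MetricSpace X] [DecidableEq ι] {p : ι → X} {x : X}
    {m : ℕ} {S T₁ T₂ : Finset ι} (h1 : IsNNIdx p x m S T₁) (h2 : IsNNIdx p x m S T₂) :
    T₁ = T₂ := by
  obtain ⟨hs1, hc1, hd1⟩ := h1
  obtain ⟨hs2, hc2, hd2⟩ := h2
  by_contra hne
  have h12 : ¬ T₁ ⊆ T₂ := fun h => hne (Finset.eq_of_subset_of_card_le h (by omega))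
  have h21 : ¬ T₂ ⊆ T₁ := fun h => hne ((Finset.eq_of_subset_of_card_le h (by omega))).symm
  obtain ⟨t, ht1, ht2⟩ := Finset.not_subset.mp h12
  obtain ⟨s, hs2', hs1'⟩ := Finset.not_subset.mp h21
  have l1 : dist x (p t) < dist x (p s) :=
    hd1 t ht1 s (Finset.mem_sdiff.mpr ⟨hs2 hs2', hs1'⟩)
  have l2 : dist x (p s) < dist x (p t) :=
    hd2 s hs2' t (Finset.mem_sdiff.mpr ⟨hs1 ht1, ht2⟩)
  exact lt_irrefl _ (l1.trans l2)

/-- for data in `ℝ^D` under the tie-breaking assumption, the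
minimiser over `k ∈ {1, …, n-1}` of the fast LOOCV formula
`((k+1)/k)² · RSS(k+1)/n` coincides with the minimiser of the brute-force
LOOCV score. -/
theorem stmt10 (D n M : ℕ) (hn : 2 ≤ n)
    (x : Fin n → EuclideanSpace ℝ (Fin D))
    (y : Fin n → EuclideanSpace ℝ (Fin M))
    (hdist : Function.Injective x)
    (htie : ∀ ℓ : Fin n, Function.Injective (fun i : Fin n => dist (x ℓ) (x i)))
    (T T' : ℕ → Fin n → Finset (Fin n))
    (hT : ∀ k ∈ Finset.Icc 1 (n - 1), ∀ ℓ,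
      IsNNIdx x (x ℓ) k (Finset.univ.erase ℓ) (T k ℓ))
    (hT' : ∀ k ∈ Finset.Icc 1 (n - 1), ∀ ℓ,
      IsNNIdx x (x ℓ) (k + 1) Finset.univ (T' k ℓ))
    -- the brute-force LOOCV score of `k`-NN regression
    (loocv : ℕ → ℝ)
    (hloocv : ∀ k ∈ Finset.Icc 1 (n - 1),
      loocv k = (1 / (n : ℝ)) * ∑ ℓ, ‖(1 / (k : ℝ)) • ∑ i ∈ T k ℓ, y i - y ℓ‖ ^ 2)
    -- the fast LOOCV formula `((k+1)/k)² · RSS(k+1) / n`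
    (fast : ℕ → ℝ)
    (hfast : ∀ k ∈ Finset.Icc 1 (n - 1),
      fast k = (((k : ℝ) + 1) / k) ^ 2 *
        ((∑ ℓ, ‖(1 / ((k : ℝ) + 1)) • ∑ i ∈ T' k ℓ, y i - y ℓ‖ ^ 2) / n))
    (k : ℕ) (hk : k ∈ Finset.Icc 1 (n - 1)) :
    (∀ j ∈ Finset.Icc 1 (n - 1), fast k ≤ fast j) ↔
      (∀ j ∈ Finset.Icc 1 (n - 1), loocv k ≤ loocv j) := by
  have key : ∀ j ∈ Finset.Icc 1 (n - 1), fast j = loocv j := by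
    intro j hj
    have hj1 : 1 ≤ j := (Finset.mem_Icc.mp hj).1
    have hjR : (1 : ℝ) ≤ (j : ℝ) := by exact_mod_cast hj1
    have hj0 : (j : ℝ) ≠ 0 := by linarith
    have hj10 : (j : ℝ) + 1 ≠ 0 := by linarith
    -- identify T' with insert ℓ (T j ℓ)
    have hTT : ∀ ℓ, T' j ℓ = insert ℓ (T j ℓ) := by
      intro ℓ
      refine nn_unique (hT' j hj ℓ) ?_
      obtain ⟨hs, hc, hd⟩ := hT j hj ℓ
      have hℓ : ℓ ∉ T j ℓ := fun h => (Finset.mem_erase.mp (hs h)).1 rfl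
      refine ⟨Finset.subset_univ _, by rw [Finset.card_insert_of_notMem hℓ, hc], ?_⟩
      intro t ht s hsmem
      have hs' : s ∉ insert ℓ (T j ℓ) := (Finset.mem_sdiff.mp hsmem).2
      have hsℓ : s ≠ ℓ := fun h => hs' (h ▸ Finset.mem_insert_self _ _)
      have hsT : s ∉ T j ℓ := fun h => hs' (Finset.mem_insert_of_mem h)
      rcases Finset.mem_insert.mp ht with rfl | htT
      · have : x t ≠ x s := fun h => hsℓ (hdist h).symm
        simpa [dist_self] using dist_pos.mpr this
      · exact hd t htT s (Finset.mem_sdiff.mpr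
          ⟨Finset.mem_erase.mpr ⟨hsℓ, Finset.mem_univ s⟩, hsT⟩)
    rw [hfast j hj, hloocv j hj]
    have hsum : ∀ ℓ,
        ‖(1 / ((j : ℝ) + 1)) • ∑ i ∈ T' j ℓ, y i - y ℓ‖ ^ 2
          = ((j : ℝ) / (j + 1)) ^ 2 * ‖(1 / (j : ℝ)) • ∑ i ∈ T j ℓ, y i - y ℓ‖ ^ 2 := by
      intro ℓ
      have hℓ : ℓ ∉ T j ℓ := fun h =>
        (Finset.mem_erase.mp ((hT j hj ℓ).1 h)).1 rfl
      rw [hTT ℓ, Finset.sum_insert hℓ]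
      have hvec : (1 / ((j : ℝ) + 1)) • (y ℓ + ∑ i ∈ T j ℓ, y i) - y ℓ
          = ((j : ℝ) / (j + 1)) • ((1 / (j : ℝ)) • ∑ i ∈ T j ℓ, y i - y ℓ) := by
        rw [smul_sub, smul_smul, smul_add]
        have h1 : (j : ℝ) / (j + 1) * (1 / j) = 1 / (j + 1) := by
          field_simp
        rw [h1]
        have h2 : ((j : ℝ) / (j + 1)) • y ℓ = y ℓ - (1 / ((j : ℝ) + 1)) • y ℓ := by
          rw [eq_sub_iff_add_eq, ← add_smul]
          have h3 : (j : ℝ) / (j + 1) + 1 / (j + 1) = 1 := by field_simp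
          rw [h3, one_smul]
        rw [h2]
        abel
      rw [hvec, norm_smul, mul_pow]
      congr 1
      rw [Real.norm_eq_abs, abs_of_nonneg (by positivity)]
    rw [Finset.sum_congr rfl (fun ℓ _ => hsum ℓ), ← Finset.mul_sum]
    have hfac : (((j : ℝ) + 1) / j) ^ 2 * ((j : ℝ) / (j + 1)) ^ 2 = 1 := by
      rw [← mul_pow]
      field_simp
    set s := ∑ ℓ, ‖(1 / (j : ℝ)) • ∑ i ∈ T j ℓ, y i - y ℓ‖ ^ 2 with hs
    have : (((j : ℝ) + 1) / j) ^ 2 * (((j : ℝ) / (j + 1)) ^ 2 * s / n)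
        = ((((j : ℝ) + 1) / j) ^ 2 * ((j : ℝ) / (j + 1)) ^ 2) * (s / n) := by ring
    rw [this, hfac, one_mul]
    ring
  constructor
  · intro h j hj
    rw [← key k hk, ← key j hj]; exact h j hj
  · intro h j hj
    rw [key k hk, key j hj]; exact h j hj
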